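/- Let X ≥ 2, let B be an R×C matrix with integer entries in {0,…,X}, let \bar{G}_B be the doubled grid of B, and let \bar{G}'_B be the doubled grid of the mirror image of the weighted grid embedding of B along the vertical axis with all shortcut vertices removed. The graph obtained by joining \bar{G}_B and \bar{G}'_B via an edge (b^r_k, b'^l_k) for each 1 ≤ k ≤ R has a unique perfect matching, namely the set of all weight-0 pairing edges {(z^u, z^d)} ∪ {(z^l, z^r)}. -/

import Mathlib

/-- Vertices of the grid embedding: `a j` (top terminals), `b i` (right terminals),
`u i j` (grid intersections), `v i j` (subdivision vertex above `u i j`),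
`w i j` (subdivision vertex to the right of `u i j`), `x i j` (shortcut vertices).
Indices are 1-based natural numbers; out-of-range vertices are isolated. -/
inductive GV : Type
  | a (j : ℕ)
  | b (i : ℕ)
  | u (i j : ℕ)
  | v (i j : ℕ)
  | w (i j : ℕ)
  | x (i j : ℕ)
deriving DecidableEq

/-- One-directional edge weights of the grid embedding of a boolean `R × C` matrix `M`;
`⊤` means "no edge". -/
def dirW (R C : ℕ) (M : ℕ → ℕ → Bool) : GV → GV → ℕ∞
  | GV.a j, GV.v i' j' =>
      if i' = 1 ∧ j' = j ∧ 1 ≤ j ∧ j ≤ C then ((2 * j - 1 : ℕ) : ℕ∞) else ⊤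
  | GV.v i j, GV.u i' j' =>
      if i' = i ∧ j' = j ∧ 1 ≤ i ∧ i ≤ R ∧ 1 ≤ j ∧ j ≤ C then 1 else ⊤
  | GV.u i j, GV.v i' j' =>
      if i' = i + 1 ∧ j' = j ∧ 1 ≤ i ∧ i + 1 ≤ R ∧ 1 ≤ j ∧ j ≤ C then
        ((2 * j - 1 : ℕ) : ℕ∞) else ⊤
  | GV.u i j, GV.w i' j' =>
      if i' = i ∧ j' = j ∧ 1 ≤ i ∧ i ≤ R ∧ 1 ≤ j ∧ j ≤ C then 2 else ⊤
  | GV.w i j, GV.u i' j' =>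
      if i' = i ∧ j' = j + 1 ∧ 1 ≤ i ∧ i ≤ R ∧ 1 ≤ j ∧ j + 1 ≤ C then
        ((2 * R - 2 : ℕ) : ℕ∞) else ⊤
  | GV.w i j, GV.b i' =>
      if i' = i ∧ j = C ∧ 1 ≤ i ∧ i ≤ R ∧ 1 ≤ C then ((2 * R - 2 : ℕ) : ℕ∞) else ⊤
  | GV.v i j, GV.x i' j' =>
      if i' = i ∧ j' = j ∧ M i j = true ∧ 1 ≤ i ∧ i ≤ R ∧ 1 ≤ j ∧ j ≤ C then 1 else ⊤
  | GV.x i j, GV.w i' j' =>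
      if i' = i ∧ j' = j ∧ M i j = true ∧ 1 ≤ i ∧ i ≤ R ∧ 1 ≤ j ∧ j ≤ C then 1 else ⊤
  | _, _ => ⊤

/-- Symmetrization of a one-directional weight function. -/
noncomputable def symW {V : Type} (f : V → V → ℕ∞) : V → V → ℕ∞ := fun p q => min (f p q) (f q p)

/-- Edge weights of the grid embedding of a boolean matrix `M`. -/
noncomputable def gridW (R C : ℕ) (M : ℕ → ℕ → Bool) : GV → GV → ℕ∞ := symW (dirW R C M)

/-- One-directional edge weights of the weighted grid embedding of an `R × C` matrix `M`
with entries in `{0, …, X}`: the grid embedding of the all-ones boolean matrix with every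
weight multiplied by `X²`, and the weight of each edge `(v i j, x i j)` increased by `M i j`. -/
def dirWt (R C X : ℕ) (M : ℕ → ℕ → ℕ) : GV → GV → ℕ∞ := fun p q =>
  (X : ℕ∞) ^ 2 * dirW R C (fun _ _ => true) p q +
    (match p, q with
      | GV.v i j, GV.x i' j' => if i' = i ∧ j' = j then (M i j : ℕ∞) else 0
      | _, _ => 0)

/-- Edge weights of the weighted grid embedding of `M`. -/
noncomputable def wgridW (R C X : ℕ) (M : ℕ → ℕ → ℕ) : GV → GV → ℕ∞ := symW (dirWt R C X M)

/-- Edge weights of the mirrored grid `G'`: the (weighted, scaled by `X²`) grid embedding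
with all shortcut vertices removed.  Mirroring is a weight-preserving graph isomorphism, so
the mirrored copy is represented by the same abstract graph. -/
noncomputable def mirW (R C X : ℕ) : GV → GV → ℕ∞ :=
  fun p q => (X : ℕ∞) ^ 2 * gridW R C (fun _ _ => false) p q

/-- Total weight of a walk, given as its list of visited vertices. -/
def cost {V : Type} (W : V → V → ℕ∞) : List V → ℕ∞
  | p :: q :: l => W p q + cost W (q :: l)
  | _ => 0

/-- Shortest-path distance: the least total weight of a walk from `s` to `t`
(`⊤` if there is none; walks through a non-edge have cost `⊤`). -/
noncomputable def gdist {V : Type} (W : V → V → ℕ∞) (s t : V) : ℕ∞ :=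
  sInf {c | ∃ l : List V, l.head? = some s ∧ l.getLast? = some t ∧ cost W l = c}

/-- One-directional edge weights of the doubled grid of a (weighted) grid `W0`.
A vertex `(z, b)` is a copy of the vertex `z`: for `a`, `u`, `v`, `x` vertices `b = true`
is the "up" copy `z^u` and `b = false` the "down" copy `z^d`; for `b`, `w` vertices
`b = true` is the "left" copy `z^l` and `b = false` the "right" copy `z^r`.
Each vertex is split into a weight-0 pairing edge, and each original edge is replaced by
one edge between appropriate copies, keeping its weight. -/
def dblDir (C : ℕ) (W0 : GV → GV → ℕ∞) : GV × Bool → GV × Bool → ℕ∞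
  | (GV.u i j, true), (GV.v i' j', false) =>
      if i' = i ∧ j' = j then W0 (GV.u i j) (GV.v i j) else ⊤
  | (GV.u i j, false), (GV.w i' j', true) =>
      if i' = i ∧ j' = j then W0 (GV.u i j) (GV.w i j) else ⊤
  | (GV.u i j, false), (GV.v i' j', true) =>
      if i' = i + 1 ∧ j' = j then W0 (GV.u i j) (GV.v (i + 1) j) else ⊤
  | (GV.u i j, true), (GV.w i' j', false) =>
      if i' = i ∧ j = j' + 1 then W0 (GV.u i j) (GV.w i j') else ⊤
  | (GV.v i j, false), (GV.x i' j', true) =>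
      if i' = i ∧ j' = j then W0 (GV.v i j) (GV.x i j) else ⊤
  | (GV.x i j, false), (GV.w i' j', true) =>
      if i' = i ∧ j' = j then W0 (GV.x i j) (GV.w i j) else ⊤
  | (GV.a j, false), (GV.v i' j', true) =>
      if i' = 1 ∧ j' = j then W0 (GV.a j) (GV.v 1 j) else ⊤
  | (GV.w i j, false), (GV.b i', true) =>
      if i' = i ∧ j = C then W0 (GV.w i j) (GV.b i) else ⊤
  | (p, true), (q, false) => if p = q then 0 else ⊤
  | _, _ => ⊤

/-- Edge weights of the doubled grid of `W0`. -/
noncomputable def dblW (C : ℕ) (W0 : GV → GV → ℕ∞) : GV × Bool → GV × Bool → ℕ∞ :=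
  symW (dblDir C W0)

/-- Membership in the (finite) vertex set of a grid embedding: the in-range vertices,
with the shortcut vertices `x i j` present only when `withX = true`. -/
def inV (R C : ℕ) (withX : Bool) : GV → Prop
  | GV.a j => 1 ≤ j ∧ j ≤ C
  | GV.b i => 1 ≤ i ∧ i ≤ R
  | GV.u i j => 1 ≤ i ∧ i ≤ R ∧ 1 ≤ j ∧ j ≤ C
  | GV.v i j => 1 ≤ i ∧ i ≤ R ∧ 1 ≤ j ∧ j ≤ C
  | GV.w i j => 1 ≤ i ∧ i ≤ R ∧ 1 ≤ j ∧ j ≤ C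
  | GV.x i j => withX = true ∧ 1 ≤ i ∧ i ≤ R ∧ 1 ≤ j ∧ j ≤ C

/-- Edge weights of the graph joining the doubled grid `\bar{G}_B` (the `inl` copy, from
the weighted grid embedding of `B`) and the doubled mirrored grid `\bar{G}'_B` (the `inr`
copy, from the mirrored grid with shortcuts removed; mirroring is a weight-preserving
isomorphism under which the free copy `b'^l k` corresponds to `(b k, false)`), via an edge
`(b^r k, b'^l k)` of weight `X²·2(C+1)(R−k) + A k` for each `1 ≤ k ≤ R`. -/
noncomputable def jdblW (R C X : ℕ) (A : ℕ → ℕ) (B : ℕ → ℕ → ℕ) :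
    (GV × Bool) ⊕ (GV × Bool) → (GV × Bool) ⊕ (GV × Bool) → ℕ∞
  | Sum.inl p, Sum.inl q => dblW C (wgridW R C X B) p q
  | Sum.inr p, Sum.inr q => dblW C (mirW R C X) p q
  | Sum.inl (GV.b k, false), Sum.inr (GV.b k', false) =>
      if k' = k ∧ 1 ≤ k ∧ k ≤ R then
        ((X ^ 2 * (2 * (C + 1) * (R - k)) + A k : ℕ) : ℕ∞) else ⊤
  | Sum.inr (GV.b k', false), Sum.inl (GV.b k, false) =>
      if k' = k ∧ 1 ≤ k ∧ k ≤ R then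
        ((X ^ 2 * (2 * (C + 1) * (R - k)) + A k : ℕ) : ℕ∞) else ⊤
  | _, _ => ⊤

/-- The vertex set of the joined doubled graph: both boolean copies of every in-range
vertex, where the mirrored (`inr`) copy has no shortcut vertices. -/
def SJD (R C : ℕ) : Set ((GV × Bool) ⊕ (GV × Bool)) := fun p =>
  match p with
  | Sum.inl (z, _) => inV R C true z
  | Sum.inr (z, _) => inV R C false z

/-- `e` is an edge of the graph with weights `W` joining two distinct vertices of `S`. -/
def edgeOK {V : Type} (W : V → V → ℕ∞) (S : Set V) (e : Sym2 V) : Prop :=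
  ∃ p q : V, e = s(p, q) ∧ p ≠ q ∧ W p q ≠ ⊤ ∧ p ∈ S ∧ q ∈ S

/-- `E` is a matching of the graph with weights `W` on the vertex set `S`:
a set of pairwise disjoint edges. -/
def IsMatch {V : Type} (W : V → V → ℕ∞) (S : Set V) (E : Finset (Sym2 V)) : Prop :=
  (∀ e ∈ E, edgeOK W S e) ∧ ∀ e ∈ E, ∀ f ∈ E, ∀ v : V, v ∈ e → v ∈ f → e = f

/-- `E` is a perfect matching of the graph with weights `W` on the vertex set `S`:
a matching covering every vertex of `S`. -/
def IsPerfMatch {V : Type} (W : V → V → ℕ∞) (S : Set V) (E : Finset (Sym2 V)) : Prop :=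
  IsMatch W S E ∧ ∀ v ∈ S, ∃ e ∈ E, v ∈ e

/-- The weight of an edge (as an unordered pair). -/
noncomputable def ewt {V : Type} (W : V → V → ℕ∞) : Sym2 V → ℕ∞ :=
  Sym2.lift ⟨fun p q => min (W p q) (W q p), fun _ _ => min_comm _ _⟩

/-- The total weight of a matching. -/
noncomputable def mwt {V : Type} (W : V → V → ℕ∞) (E : Finset (Sym2 V)) : ℕ∞ :=
  ∑ e ∈ E, ewt W e

/-! The pairing edges `{z, σ z}`, `σ` exchanging the two copies of a vertex, form a perfect
matching. For uniqueness, give every grid vertex a level `gvLevel` that grows by one along each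
grid edge towards the bottom right. Every non-pairing edge of a doubled grid joins an up/left
copy `(z, true)` to a down/right copy `(z', false)` with `gvLevel z' < gvLevel z`, so the
potential `Φ (z, true) = gvLevel z`, `Φ (z, false) = N - gvLevel z` satisfies `Φ (σ q) < Φ p`
along every non-pairing edge `{p, q}`; with `N` above twice every level this also holds on the
bridges `(b k, false) — (b' k, false)`. Hence, by induction on `Φ p`, a vertex `p` matched to
`q ≠ σ p` is impossible: the lower vertex `σ q` is matched to its twin `q`, which would then lie
on two matching edges. -/

section PairMatching

variable {V : Type} {W : V → V → ℕ∞} {S : Set V} {σ : V → V}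

theorem isPerfMatch_image_pair (hS : S.Finite) (hσ : Function.Involutive σ)
    (hσS : ∀ v ∈ S, σ v ∈ S) (hfix : ∀ v ∈ S, σ v ≠ v) (hW : ∀ v ∈ S, W v (σ v) ≠ ⊤) :
    IsPerfMatch W S (hS.image fun v => s(v, σ v)).toFinset := by
  simp only [IsPerfMatch, IsMatch, Set.Finite.mem_toFinset, Set.mem_image]
  refine ⟨⟨?_, ?_⟩, fun v hv => ⟨_, ⟨v, hv, rfl⟩, Sym2.mem_mk_left v (σ v)⟩⟩
  · rintro _ ⟨v, hv, rfl⟩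
    exact ⟨v, σ v, rfl, (hfix v hv).symm, hW v hv, hv, hσS v hv⟩
  · rintro _ ⟨v, -, rfl⟩ _ ⟨w, -, rfl⟩ x hxv hxw
    rw [Sym2.mem_iff] at hxv hxw
    rcases hxv with rfl | rfl <;> rcases hxw with h | h
    · rw [h]
    · rw [h, hσ]; exact Sym2.eq_swap
    · rw [← h, hσ]; exact Sym2.eq_swap
    · rw [hσ.injective h]

theorem IsPerfMatch.eq_pair_of_mem {E : Finset (Sym2 V)} (hE : IsPerfMatch W S E)
    (hσ : Function.Involutive σ) (hσS : ∀ v ∈ S, σ v ∈ S) (Φ : V → ℕ)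
    (hΦ : ∀ p ∈ S, ∀ q ∈ S, W p q ≠ ⊤ → q ≠ σ p → Φ (σ q) < Φ p ∧ Φ (σ p) < Φ q)
    (v : V) : ∀ e ∈ E, v ∈ e → e = s(v, σ v) := by
  induction hn : Φ v using Nat.strong_induction_on generalizing v with
  | _ n ih =>
  -- `σ w` is lower than `v`, hence matched to `w`, so `w` would lie on two edges of `E`
  have no_other_partner : ∀ w ∈ S, s(v, w) ∈ E → w ≠ σ v → Φ (σ w) < Φ v → False := by
    intro w hw hvw hne hlt
    obtain ⟨f, hf, hwf⟩ := hE.2 (σ w) (hσS w hw)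
    have hf' : f = s(w, σ w) := by
      rw [ih _ (hn ▸ hlt) (σ w) rfl f hf hwf, hσ w, Sym2.eq_swap]
    have hvw' : s(v, w) = s(w, σ w) :=
      hf' ▸ hE.1.2 _ hvw _ hf w (Sym2.mem_mk_right v w) (hf' ▸ Sym2.mem_mk_left w (σ w))
    rcases Sym2.eq_iff.mp hvw' with ⟨rfl, h⟩ | ⟨h, -⟩
    · exact hne h
    · exact hne (by rw [h, hσ])
  intro e he hve
  obtain ⟨p, q, rfl, -, hpq, hp, hq⟩ := hE.1.1 e he
  by_contra hne
  rcases Sym2.mem_iff.mp hve with rfl | rfl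
  · have hqv : q ≠ σ v := fun h => hne (by rw [h])
    exact no_other_partner q hq he hqv (hΦ v hp q hq hpq hqv).1
  · have hpv : p ≠ σ v := fun h => hne (by rw [h, Sym2.eq_swap])
    have hvp : v ≠ σ p := fun h => hpv (by rw [h, hσ])
    exact no_other_partner p hp (by rwa [Sym2.eq_swap]) hpv (hΦ p hp v hq hpq hvp).2

theorem IsPerfMatch.mem_iff_exists_pair {E : Finset (Sym2 V)} (hE : IsPerfMatch W S E)
    (hσ : Function.Involutive σ) (hσS : ∀ v ∈ S, σ v ∈ S) (Φ : V → ℕ)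
    (hΦ : ∀ p ∈ S, ∀ q ∈ S, W p q ≠ ⊤ → q ≠ σ p → Φ (σ q) < Φ p ∧ Φ (σ p) < Φ q)
    (e : Sym2 V) : e ∈ E ↔ ∃ v ∈ S, e = s(v, σ v) := by
  constructor
  · intro he
    obtain ⟨p, q, rfl, -, -, hp, -⟩ := hE.1.1 e he
    exact ⟨p, hp, hE.eq_pair_of_mem hσ hσS Φ hΦ p _ he (Sym2.mem_mk_left p q)⟩
  · rintro ⟨v, hv, rfl⟩
    obtain ⟨f, hf, hvf⟩ := hE.2 v hv
    rwa [← hE.eq_pair_of_mem hσ hσS Φ hΦ v f hf hvf]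

end PairMatching

lemma setOf_inV_finite (R C : ℕ) (withX : Bool) : {z | inV R C withX z}.Finite := by
  refine ((Set.finite_Iic R).prod (Set.finite_Iic C)).biUnion
    (t := fun ij => {GV.a ij.2, GV.b ij.1, GV.u ij.1 ij.2, GV.v ij.1 ij.2, GV.w ij.1 ij.2,
      GV.x ij.1 ij.2}) (fun _ _ => Set.toFinite _) |>.subset ?_
  have hR : ∃ i, i ≤ R := ⟨0, R.zero_le⟩
  have hC : ∃ j, j ≤ C := ⟨0, C.zero_le⟩
  rintro (j | i | ⟨i, j⟩ | ⟨i, j⟩ | ⟨i, j⟩ | ⟨i, j⟩) h <;> simp only [inV, Set.mem_ofPred_eq] at h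
    <;> simp [hR, hC] <;> omega

lemma SJD_finite (R C : ℕ) : (SJD R C).Finite := by
  refine (((setOf_inV_finite R C true).prod Set.finite_univ).image Sum.inl).union
    (((setOf_inV_finite R C false).prod Set.finite_univ).image Sum.inr) |>.subset ?_
  rintro (⟨z, c⟩ | ⟨z, c⟩) h
  · exact Or.inl ⟨(z, c), ⟨h, trivial⟩, rfl⟩
  · exact Or.inr ⟨(z, c), ⟨h, trivial⟩, rfl⟩

def copyTwin (p : GV × Bool) : GV × Bool := (p.1, !p.2)

lemma copyTwin_involutive : Function.Involutive copyTwin := fun p => by simp [copyTwin]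

def jdblTwin : (GV × Bool) ⊕ (GV × Bool) → (GV × Bool) ⊕ (GV × Bool) :=
  Sum.map copyTwin copyTwin

lemma jdblTwin_involutive : Function.Involutive jdblTwin := by
  rintro (p | p) <;> simp [jdblTwin, copyTwin_involutive p]

lemma jdblTwin_mem_SJD {R C : ℕ} {P : (GV × Bool) ⊕ (GV × Bool)} (h : P ∈ SJD R C) :
    jdblTwin P ∈ SJD R C := by
  rcases P with ⟨z, c⟩ | ⟨z, c⟩ <;> exact h

lemma jdblTwin_ne (P : (GV × Bool) ⊕ (GV × Bool)) : jdblTwin P ≠ P := by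
  rcases P with ⟨z, c⟩ | ⟨z, c⟩ <;> simp [jdblTwin, copyTwin]

lemma dblW_copyTwin_ne_top (C : ℕ) (W0 : GV → GV → ℕ∞) (p : GV × Bool) :
    dblW C W0 p (copyTwin p) ≠ ⊤ := by
  obtain ⟨z, _ | _⟩ := p <;> cases z <;> simp [dblW, symW, dblDir, copyTwin]

lemma jdblW_jdblTwin_ne_top (R C X : ℕ) (A : ℕ → ℕ) (B : ℕ → ℕ → ℕ)
    (P : (GV × Bool) ⊕ (GV × Bool)) : jdblW R C X A B P (jdblTwin P) ≠ ⊤ := by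
  rcases P with p | p
  · exact dblW_copyTwin_ne_top C _ p
  · exact dblW_copyTwin_ne_top C _ p

def gvLevel (C : ℕ) : GV → ℕ
  | GV.a j => 2 * j
  | GV.b i => 2 * i + 2 * C + 2
  | GV.u i j => 2 * i + 2 * j
  | GV.v i j => 2 * i + 2 * j - 1
  | GV.w i j => 2 * i + 2 * j + 1
  | GV.x i j => 2 * i + 2 * j

def copyLevel (R C : ℕ) : GV × Bool → ℕ
  | (z, true) => gvLevel C z
  | (z, false) => 4 * R + 4 * C + 5 - gvLevel C z

lemma copyLevel_lt_of_dblDir_ne_top {R C : ℕ} {withX : Bool} (W0 : GV → GV → ℕ∞)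
    {p q : GV × Bool} (hp : inV R C withX p.1) (hq : inV R C withX q.1)
    (h : dblDir C W0 p q ≠ ⊤) (hne : q ≠ copyTwin p) :
    copyLevel R C (copyTwin q) < copyLevel R C p ∧
      copyLevel R C (copyTwin p) < copyLevel R C q := by
  obtain ⟨z1, c1⟩ := p
  obtain ⟨z2, c2⟩ := q
  cases z1 <;> cases z2 <;> cases c1 <;> cases c2 <;>
    simp only [dblDir, copyTwin] at h hne ⊢ <;> (try split_ifs at h) <;>
    simp_all [inV, copyLevel, gvLevel] <;> omega

lemma copyLevel_lt_of_dblW_ne_top {R C : ℕ} {withX : Bool} (W0 : GV → GV → ℕ∞)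
    {p q : GV × Bool} (hp : inV R C withX p.1) (hq : inV R C withX q.1)
    (h : dblW C W0 p q ≠ ⊤) (hne : q ≠ copyTwin p) :
    copyLevel R C (copyTwin q) < copyLevel R C p ∧
      copyLevel R C (copyTwin p) < copyLevel R C q := by
  rcases not_and_or.mp (mt min_eq_top.mpr h) with hpq | hqp
  · exact copyLevel_lt_of_dblDir_ne_top W0 hp hq hpq hne
  · have hne' : p ≠ copyTwin q := fun hp => hne (by rw [hp, copyTwin_involutive])
    exact (copyLevel_lt_of_dblDir_ne_top W0 hq hp hqp hne').symm

lemma jdblW_inl_inr_ne_top {R C X : ℕ} {A : ℕ → ℕ} {B : ℕ → ℕ → ℕ} {p q : GV × Bool}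
    (h : jdblW R C X A B (Sum.inl p) (Sum.inr q) ≠ ⊤) :
    ∃ k ≤ R, p = (GV.b k, false) ∧ q = (GV.b k, false) := by
  obtain ⟨_ | _ | _ | _ | _ | _, _ | _⟩ := p <;> obtain ⟨_ | _ | _ | _ | _ | _, _ | _⟩ := q <;>
    simp only [jdblW] at h <;> (try split_ifs at h) <;> simp_all

lemma jdblW_inr_inl_ne_top {R C X : ℕ} {A : ℕ → ℕ} {B : ℕ → ℕ → ℕ} {p q : GV × Bool}
    (h : jdblW R C X A B (Sum.inr p) (Sum.inl q) ≠ ⊤) :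
    ∃ k ≤ R, p = (GV.b k, false) ∧ q = (GV.b k, false) := by
  obtain ⟨_ | _ | _ | _ | _ | _, _ | _⟩ := p <;> obtain ⟨_ | _ | _ | _ | _ | _, _ | _⟩ := q <;>
    simp only [jdblW] at h <;> (try split_ifs at h) <;> simp_all

def jdblLevel (R C : ℕ) : (GV × Bool) ⊕ (GV × Bool) → ℕ :=
  Sum.elim (copyLevel R C) (copyLevel R C)

lemma copyLevel_copyTwin_b_lt {R C k : ℕ} (hk : k ≤ R) :
    copyLevel R C (copyTwin (GV.b k, false)) < copyLevel R C (GV.b k, false) := by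
  simp only [copyTwin, copyLevel, gvLevel, Bool.not_false]
  omega

lemma jdblLevel_lt_of_jdblW_ne_top {R C X : ℕ} (A : ℕ → ℕ) (B : ℕ → ℕ → ℕ)
    {P Q : (GV × Bool) ⊕ (GV × Bool)} (hP : P ∈ SJD R C) (hQ : Q ∈ SJD R C)
    (h : jdblW R C X A B P Q ≠ ⊤) (hne : Q ≠ jdblTwin P) :
    jdblLevel R C (jdblTwin Q) < jdblLevel R C P ∧
      jdblLevel R C (jdblTwin P) < jdblLevel R C Q := by
  rcases P with p | p <;> rcases Q with q | q
  · exact copyLevel_lt_of_dblW_ne_top _ hP hQ h fun e => hne (congrArg Sum.inl e)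
  · obtain ⟨k, hk, rfl, rfl⟩ := jdblW_inl_inr_ne_top h
    exact ⟨copyLevel_copyTwin_b_lt hk, copyLevel_copyTwin_b_lt hk⟩
  · obtain ⟨k, hk, rfl, rfl⟩ := jdblW_inr_inl_ne_top h
    exact ⟨copyLevel_copyTwin_b_lt hk, copyLevel_copyTwin_b_lt hk⟩
  · exact copyLevel_lt_of_dblW_ne_top _ hP hQ h fun e => hne (congrArg Sum.inr e)

lemma exists_mem_SJD_eq_jdblTwin_iff (R C : ℕ) (e : Sym2 ((GV × Bool) ⊕ (GV × Bool))) :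
    (∃ P ∈ SJD R C, e = s(P, jdblTwin P)) ↔
      ((∃ z : GV, inV R C true z ∧ e = s(Sum.inl (z, true), Sum.inl (z, false))) ∨
       (∃ z : GV, inV R C false z ∧ e = s(Sum.inr (z, true), Sum.inr (z, false)))) := by
  constructor
  · rintro ⟨⟨z, _ | _⟩ | ⟨z, _ | _⟩, hP, rfl⟩
    · exact Or.inl ⟨z, hP, Sym2.eq_swap⟩
    · exact Or.inl ⟨z, hP, rfl⟩
    · exact Or.inr ⟨z, hP, Sym2.eq_swap⟩
    · exact Or.inr ⟨z, hP, rfl⟩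
  · rintro (⟨z, hz, rfl⟩ | ⟨z, hz, rfl⟩)
    · exact ⟨Sum.inl (z, true), hz, rfl⟩
    · exact ⟨Sum.inr (z, true), hz, rfl⟩

theorem jdbl_unique_perfect_matching_general (R C X : ℕ) (B : ℕ → ℕ → ℕ) :
    (∃ E : Finset (Sym2 ((GV × Bool) ⊕ (GV × Bool))),
        IsPerfMatch (jdblW R C X (fun _ => 0) B) (SJD R C) E) ∧
      ∀ E : Finset (Sym2 ((GV × Bool) ⊕ (GV × Bool))),
        IsPerfMatch (jdblW R C X (fun _ => 0) B) (SJD R C) E →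
        ∀ e, e ∈ E ↔
          ((∃ z : GV, inV R C true z ∧ e = s(Sum.inl (z, true), Sum.inl (z, false))) ∨
           (∃ z : GV, inV R C false z ∧ e = s(Sum.inr (z, true), Sum.inr (z, false)))) := by
  have hTwin : ∀ P ∈ SJD R C, jdblTwin P ∈ SJD R C := fun _ => jdblTwin_mem_SJD
  refine ⟨⟨_, isPerfMatch_image_pair (SJD_finite R C) jdblTwin_involutive hTwin
    (fun P _ => jdblTwin_ne P) (fun P _ => jdblW_jdblTwin_ne_top R C X _ B P)⟩, fun E hE e => ?_⟩
  rw [hE.mem_iff_exists_pair jdblTwin_involutive hTwin (jdblLevel R C)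
    (fun _ hP _ hQ => jdblLevel_lt_of_jdblW_ne_top _ B hP hQ), exists_mem_SJD_eq_jdblTwin_iff]

/-- Proposition 4.2.  The graph obtained by joining the doubled grids
`\bar{G}_B` and `\bar{G}'_B` via an edge `(b^r k, b'^l k)` for each `1 ≤ k ≤ R` has a
unique perfect matching, namely the set of all weight-0 pairing edges
`{(z^u, z^d)} ∪ {(z^l, z^r)}`. -/
theorem jdbl_unique_perfect_matching (R C X : ℕ) (hR : 1 ≤ R) (hC : 1 ≤ C) (hX : 2 ≤ X)
    (B : ℕ → ℕ → ℕ) (hB : ∀ i j, 1 ≤ i → i ≤ R → 1 ≤ j → j ≤ C → B i j ≤ X) :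
    (∃ E : Finset (Sym2 ((GV × Bool) ⊕ (GV × Bool))),
        IsPerfMatch (jdblW R C X (fun _ => 0) B) (SJD R C) E) ∧
      ∀ E : Finset (Sym2 ((GV × Bool) ⊕ (GV × Bool))),
        IsPerfMatch (jdblW R C X (fun _ => 0) B) (SJD R C) E →
        ∀ e, e ∈ E ↔
          ((∃ z : GV, inV R C true z ∧ e = s(Sum.inl (z, true), Sum.inl (z, false))) ∨
           (∃ z : GV, inV R C false z ∧ e = s(Sum.inr (z, true), Sum.inr (z, false)))) :=
  jdbl_unique_perfect_matching_general R C X B
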